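/- Let n ≥ 3 and let 𝓜 be the (n−1)×(n−1) real matrix of the linear map (x₁, …, x_{n−1}) ↦ (x₂ − x₁, x₃ − x₁, …, x_{n−1} − x₁, −x₁). Then the characteristic polynomial of 𝓜 equals X^{n−1} + X^{n−2} + ⋯ + X + 1. -/

import Mathlib

open Polynomial

noncomputable section

/-- The `(n-1) × (n-1)` real matrix of the linear map
`𝓜(x₁,…,x_{n-1}) = (x₂ − x₁, …, x_{n-1} − x₁, −x₁)` in the standard basis. -/
def Mmat (n : ℕ) : Matrix (Fin (n - 1)) (Fin (n - 1)) ℝ :=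
  Matrix.of fun i j =>
    (if (j : ℕ) = (i : ℕ) + 1 then (1 : ℝ) else 0) - (if (j : ℕ) = 0 then 1 else 0)

/-- Auxiliary matrix: the characteristic matrix of `Mmat`, for size `m`. -/
def Amat (m : ℕ) : Matrix (Fin m) (Fin m) (Polynomial ℝ) :=
  Matrix.of fun i j =>
    (if (i : ℕ) = (j : ℕ) then (X : Polynomial ℝ) else 0)
      - (if (j : ℕ) = (i : ℕ) + 1 then 1 else 0) + (if (j : ℕ) = 0 then 1 else 0)

lemma Amat_det (m : ℕ) : (Amat m).det = ∑ i ∈ Finset.range (m + 1), (X : Polynomial ℝ) ^ i := by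
  induction m with
  | zero => simp [Amat, Matrix.det_fin_zero]
  | succ m ih =>
    rw [geom_sum_succ, ← ih]
    rcases Nat.eq_zero_or_pos m with hm | hm
    · subst hm
      rw [Matrix.det_fin_one]
      simp [Amat, Matrix.det_fin_zero]
    · rw [Matrix.det_succ_row (Amat (m + 1)) (Fin.last m)]
      rw [Fintype.sum_eq_add (0 : Fin (m + 1)) (Fin.last m)
        (by simp [Fin.ext_iff]; omega)
        (by
          intro c hc
          have h1 : (c : ℕ) ≠ 0 := by intro h; apply hc.1; ext; simp [h]
          have h2 : (c : ℕ) ≠ m := by simpa [Fin.ext_iff] using hc.2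
          have h3 : (c : ℕ) < m + 1 := c.isLt
          have : Amat (m + 1) (Fin.last m) c = 0 := by
            simp only [Amat, Matrix.of_apply, Fin.val_last]
            rw [if_neg (by omega), if_neg (by omega), if_neg h1]
            ring
          simp [this])]
      have hm1 : m ≠ m + 1 := by omega
      have hm0 : m ≠ 0 := by omega
      have hA0 : Amat (m + 1) (Fin.last m) 0 = 1 := by
        simp [Amat, hm0]
      have hAl : Amat (m + 1) (Fin.last m) (Fin.last m) = X := by
        simp [Amat, hm1, hm0]
      have hsub1 : ((Amat (m + 1)).submatrix (Fin.last m).succAbove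
          (Fin.last m).succAbove) = Amat m := by
        ext i j
        simp [Amat, Fin.succAbove_last, Matrix.submatrix_apply]
        simp [Fin.ext_iff]
      have hsub0 : ((Amat (m + 1)).submatrix (Fin.last m).succAbove
          (0 : Fin (m + 1)).succAbove).det = (-1) ^ m := by
        have htri : ((Amat (m + 1)).submatrix (Fin.last m).succAbove
            (0 : Fin (m + 1)).succAbove).BlockTriangular OrderDual.toDual := by
          intro i j hij
          have hij' : (i : ℕ) < (j : ℕ) := hij
          simp only [Matrix.submatrix_apply, Fin.succAbove_last, Fin.succAbove_zero,
            Amat, Matrix.of_apply, Fin.coe_castSucc, Fin.val_succ]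
          rw [if_neg (by omega), if_neg (by omega), if_neg (by omega)]
          ring
        rw [Matrix.det_of_lowerTriangular _ htri]
        have hdiag : ∀ i : Fin m, Amat (m + 1) i.castSucc i.succ = -1 := by
          intro i
          simp [Amat]
        simp [hdiag, Finset.prod_const, Finset.card_univ]
      rw [hA0, hAl, hsub1, hsub0]
      have h1 : ((-1 : Polynomial ℝ)) ^ (m + m) = 1 := by
        rw [← two_mul, pow_mul]; norm_num
      have h2 : ((-1 : Polynomial ℝ)) ^ m * (-1 : Polynomial ℝ) ^ m = 1 := by
        rw [← pow_add, ← two_mul, pow_mul]; norm_num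
      simp only [Fin.val_last, Fin.val_zero, add_zero, one_mul, mul_one]
      rw [h1, h2]
      ring

/-- The characteristic polynomial of `𝓜` is
`X^{n-1} + X^{n-2} + ⋯ + X + 1`. -/
theorem Mmat_charpoly (n : ℕ) (hn : 3 ≤ n) :
    (Mmat n).charpoly = ∑ i ∈ Finset.range n, (X : Polynomial ℝ) ^ i := by
  have hcm : Matrix.charmatrix (Mmat n) = Amat (n - 1) := by
    apply Matrix.ext
    intro i j
    by_cases hij : i = j
    · subst hij
      by_cases h0 : (i : ℕ) = 0 <;>
        simp [Matrix.charmatrix_apply_eq, Amat, Mmat, h0]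
    · have hij' : (i : ℕ) ≠ (j : ℕ) := fun h => hij (Fin.ext h)
      rw [Matrix.charmatrix_apply_ne _ _ _ hij]
      by_cases h1 : (j : ℕ) = (i : ℕ) + 1 <;> by_cases h0 : (j : ℕ) = 0 <;>
        simp [Amat, Mmat, h1, h0, Ne.symm hij', hij'] <;> omega
  rw [Matrix.charpoly, hcm, Amat_det, Nat.sub_add_cancel (by omega : 1 ≤ n)]
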